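/- arXiv:0705.2343 — 3 statements merged into one kernel-verified Lean document; each statement's English description precedes it below -/
import Mathlib

section
/- Let n : V → V be a linear endomorphism. For fixed natural numbers r, k, d, the set of complete flags F₁ ⊆ ⋯ ⊆ F_N in V with dim(F_r + nᵏ(F_r)) ≤ d is a Zariski-closed subset of the complete flag variety of V. -/
/-!
A family of vectors in `K^N` spans a space of dimension at most `d` exactly when all
`(d + 1) × (d + 1)` minors of its coordinate matrix vanish. The generators of
`F_r + nᵏ(F_r)` are the first `r` columns of `g` and their images under the matrix of `nᵏ`,
whose coordinates are linear polynomials in the entries of `g`; so the minors are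
polynomials in those entries.
-/

open Submodule Module Matrix

section

variable {K V : Type*} [Field K] [AddCommGroup V] [Module K V] [FiniteDimensional K V]

theorem exists_linearIndependent_comp_of_le_finrank_span {ι : Type*} (v : ι → V) {m : ℕ}
    (hm : m ≤ finrank K (span K (Set.range v))) :
    ∃ s : Fin m → ι, LinearIndependent K (v ∘ s) := by
  obtain ⟨κ, a, -, hspan, hli⟩ := exists_linearIndependent' K v
  have := hli.finite
  cases nonempty_fintype κ
  rw [← hspan, finrank_span_eq_card hli] at hm
  obtain ⟨e⟩ :=
    Function.Embedding.nonempty_of_card_le (α := Fin m) (β := κ) (by simpa using hm)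
  exact ⟨a ∘ e, hli.comp e e.injective⟩

theorem finrank_span_range_le_iff {ι : Type*} (v : ι → V) (d : ℕ) :
    finrank K (span K (Set.range v)) ≤ d ↔
      ∀ s : Fin (d + 1) → ι, ¬LinearIndependent K (v ∘ s) := by
  refine ⟨fun h s hs => ?_, fun h => ?_⟩
  · have hcard := finrank_span_eq_card (R := K) hs
    have hle : finrank K (span K (Set.range (v ∘ s))) ≤ finrank K (span K (Set.range v)) :=
      Submodule.finrank_mono (span_mono (Set.range_comp_subset_range s v))
    rw [hcard, Fintype.card_fin] at hle
    omega
  · by_contra! hd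
    obtain ⟨s, hs⟩ := exists_linearIndependent_comp_of_le_finrank_span v hd
    exact h s hs

end

section

variable {K : Type*} [Field K]

theorem linearIndependent_iff_exists_det_ne_zero {m : ℕ} {n : Type*} [Fintype n]
    (w : Fin m → n → K) :
    LinearIndependent K w ↔ ∃ t : Fin m → n, (Matrix.of fun i j => w j (t i)).det ≠ 0 := by
  constructor
  · intro hw
    set M : Matrix n (Fin m) K := Matrix.of fun i j => w j i
    have hrank : finrank K (span K (Set.range M.row)) = m := by
      rw [← rank_eq_finrank_span_row, ← rank_transpose]
      simpa using hw.rank_matrix (M := Mᵀ)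
    obtain ⟨t, ht⟩ := exists_linearIndependent_comp_of_le_finrank_span M.row hrank.ge
    exact ⟨t, (isUnit_iff_isUnit_det _).mp (linearIndependent_rows_iff_isUnit.mp ht) |>.ne_zero⟩
  · rintro ⟨t, ht⟩
    have hcols := linearIndependent_cols_iff_isUnit.mpr
      ((isUnit_iff_isUnit_det _).mpr (isUnit_iff_ne_zero.mpr ht))
    exact LinearIndependent.of_comp (LinearMap.funLeft K K t) hcols

theorem finrank_span_range_le_iff_forall_det_eq_zero {ι n : Type*} [Fintype n]
    (v : ι → n → K) (d : ℕ) :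
    finrank K (span K (Set.range v)) ≤ d ↔
      ∀ (s : Fin (d + 1) → ι) (t : Fin (d + 1) → n),
        (Matrix.of fun i j => v (s j) (t i)).det = 0 := by
  simp [finrank_span_range_le_iff, linearIndependent_iff_exists_det_ne_zero, Function.comp_def]

theorem exists_vanishing_iff_finrank_span_range_eval_le {σ ι n : Type*} [Fintype n]
    (E : ι → n → MvPolynomial σ K) (d : ℕ) :
    ∃ P : Set (MvPolynomial σ K), ∀ g : σ → K,
      finrank K (span K (Set.range fun x i => MvPolynomial.eval g (E x i))) ≤ d ↔
        ∀ f ∈ P, MvPolynomial.eval g f = 0 := by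
  refine ⟨Set.range fun p : (Fin (d + 1) → ι) × (Fin (d + 1) → n) =>
    (Matrix.of fun i j => E (p.1 j) (p.2 i)).det, fun g => ?_⟩
  simp only [finrank_span_range_le_iff_forall_det_eq_zero, Set.forall_mem_range, Prod.forall,
    RingHom.map_det]
  rfl

end

theorem span_sup_map_span_range {R M ι : Type*} [Semiring R] [AddCommMonoid M] [Module R M]
    (f : M →ₗ[R] M) (w : ι → M) :
    span R (Set.range w) ⊔ map f (span R (Set.range w)) =
      span R (Set.range (Sum.elim w (f ∘ w))) := by
  rw [map_span, ← span_union, Set.Sum.elim_range, Set.range_comp]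

theorem MvPolynomial.eval_mulVec_map_C {R σ m n : Type*} [CommSemiring R] [Fintype n]
    (A : Matrix m n R) (v : n → MvPolynomial σ R) (g : σ → R) (i : m) :
    eval g ((A.map C *ᵥ v) i) = (A *ᵥ fun j => eval g (v j)) i := by
  rw [RingHom.map_mulVec, Matrix.map_map]
  simp [Function.comp_def]

theorem stmt3_general {K : Type*} [Field K] (N : ℕ)
    (n : (Fin N → K) →ₗ[K] (Fin N → K)) (r k d : ℕ) :
    ∃ P : Set (MvPolynomial (Fin N × Fin N) K),
      ∀ g : Fin N × Fin N → K,
        IsUnit (Matrix.of fun r' c : Fin N => g (r', c)).det →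
        ((Module.finrank K
            ↥(Submodule.span K ((fun c : Fin N => fun r' : Fin N => g (r', c)) '' {c | c.1 < r})
              ⊔ Submodule.map (n ^ k)
                (Submodule.span K
                  ((fun c : Fin N => fun r' : Fin N => g (r', c)) '' {c | c.1 < r}))) ≤ d)
          ↔ ∀ f ∈ P, MvPolynomial.eval g f = 0) := by
  let S : Set (Fin N) := {c | c.1 < r}
  let genericColumn (c : S) (i : Fin N) : MvPolynomial (Fin N × Fin N) K := MvPolynomial.X (i, c.1)
  let E := Sum.elim genericColumn
    fun c => (LinearMap.toMatrix' (n ^ k)).map MvPolynomial.C *ᵥ genericColumn c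
  obtain ⟨P, hP⟩ := exists_vanishing_iff_finrank_span_range_eval_le E d
  refine ⟨P, fun g _ => ?_⟩
  let column (c : S) (i : Fin N) : K := g (i, c.1)
  have heval : (fun x i => MvPolynomial.eval g (E x i)) = Sum.elim column ((n ^ k) ∘ column) := by
    ext (c | c) i
    · simp [E, genericColumn, column]
    · simp [E, genericColumn, column, MvPolynomial.eval_mulVec_map_C, LinearMap.toMatrix'_mulVec]
  rw [← hP g, heval, ← span_sup_map_span_range, Set.image_eq_range]

/-- Let `n` be a linear endomorphism of `V = K^N` (`K` algebraically closed). For fixed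
`r, k, d`, the condition `dim(F_r + nᵏ(F_r)) ≤ d` on complete flags is Zariski-closed:
parametrizing flags by bases `g` (invertible matrices, with `F_j` the span of the first `j`
columns of `g`), there is a set of polynomials in the matrix entries whose simultaneous
vanishing is equivalent, on the locus of bases, to `dim(F_r + nᵏ(F_r)) ≤ d`. -/
theorem stmt3 {K : Type*} [Field K] [IsAlgClosed K] (N : ℕ)
    (n : (Fin N → K) →ₗ[K] (Fin N → K)) (r k d : ℕ) :
    ∃ P : Set (MvPolynomial (Fin N × Fin N) K),
      ∀ g : Fin N × Fin N → K,
        IsUnit (Matrix.of fun r' c : Fin N => g (r', c)).det →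
        ((Module.finrank K
            ↥(Submodule.span K ((fun c : Fin N => fun r' : Fin N => g (r', c)) '' {c | c.1 < r})
              ⊔ Submodule.map (n ^ k)
                (Submodule.span K
                  ((fun c : Fin N => fun r' : Fin N => g (r', c)) '' {c | c.1 < r}))) ≤ d)
          ↔ ∀ f ∈ P, MvPolynomial.eval g f = 0) :=
  stmt3_general N n r k d
end

section
/- Let n be a nilpotent endomorphism of V of Jordan type (p,q) with p ≥ q ≥ 1, and let F₁ ⊆ V be a 1-dimensional subspace contained in ker(n). If F₁ ≠ span(e_{1,1}) (i.e., F₁ is spanned by a·e_{1,1} + e_{1,2} for some a ∈ K), then the induced endomorphism on V/F₁ is nilpotent of Jordan type (p, q−1) (or type (p) if q = 1). -/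
/-!
Replacing the second Jordan chain `e_{i,2}` by `a • e_{i,1} + e_{i,2}` gives again a basis made of
two Jordan chains of lengths `p` and `q`, and in it `F₁` is the line through the bottom vector of
the second chain. The kernel of `n̄ ^ s` on `V ⧸ F₁` is `(n ^ s)⁻¹(F₁) ⧸ F₁`, and since `n ^ s` maps
each basis vector to a basis vector or to `0`, injectively where nonzero, `(n ^ s)⁻¹(F₁)` is spanned
by the basis vectors it contains: the bottom `s` vectors of the first chain and the bottom `s + 1`
of the second. Hence `dim ker n̄ ^ s = min s p + min (s + 1) q - 1 = min s p + min s (q - 1)`.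
-/

open Submodule

section

open Module Finset

namespace Module.Basis

section Semiring

variable {R M ι : Type*} [Semiring R] [AddCommMonoid M] [Module R M] (b : Basis ι R M)
  {T : M →ₗ[R] M} {σ : ι → Option ι}

lemma repr_apply_eq_of_mem (hT : ∀ i, T (b i) = (σ i).elim 0 b)
    (hσ : ∀ i i' k, k ∈ σ i → k ∈ σ i' → i = i') {i k : ι} (hik : k ∈ σ i) (x : M) :
    b.repr (T x) k = b.repr x i := by
  classical
  change (b.coord k ∘ₗ T) x = b.coord i x
  congr 1
  refine b.ext fun j => ?_
  rcases hj : σ j with _ | k'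
  · have hji : j ≠ i := by rintro rfl; simp_all
    simp [hT, hj, hji]
  · have : k' = k ↔ j = i := ⟨fun h => hσ j i k (h ▸ hj) hik, by rintro rfl; simp_all⟩
    simp [hT, hj, Finsupp.single_apply, this, eq_comm]

lemma comap_span_image (hT : ∀ i, T (b i) = (σ i).elim 0 b)
    (hσ : ∀ i i' k, k ∈ σ i → k ∈ σ i' → i = i') (S : Set ι) :
    comap T (span R (b '' S)) = span R (b '' {i | ∀ k ∈ σ i, k ∈ S}) := by
  refine le_antisymm (fun x hx => ?_) (span_le.2 ?_)
  · rw [mem_comap, mem_span_image] at hx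
    rw [mem_span_image]
    intro i hi k hik
    by_contra hkS
    rw [Finset.mem_coe, Finsupp.mem_support_iff, ← b.repr_apply_eq_of_mem hT hσ hik] at hi
    exact hkS (hx (Finsupp.mem_support_iff.2 hi))
  · rintro _ ⟨i, hi, rfl⟩
    rcases hσi : σ i with _ | k
    · simp [hT, hσi]
    · simpa [hT, hσi] using subset_span (R := R) (Set.mem_image_of_mem b (hi k hσi))

end Semiring

lemma exists_basis_inr_add {R M ι κ : Type*} [Ring R] [AddCommGroup M] [Module R M]
    (b : Basis (ι ⊕ κ) R M) (v : κ → M) (hv : ∀ k, v k ∈ span R (Set.range (b ∘ Sum.inl))) :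
    ∃ e : Basis (ι ⊕ κ) R M,
      (∀ i, e (.inl i) = b (.inl i)) ∧ ∀ k, e (.inr k) = b (.inr k) + v k := by
  set N : Module.End R M := b.constr ℕ (Sum.elim 0 v)
  have hN_inl : span R (Set.range (b ∘ Sum.inl)) ≤ LinearMap.ker N :=
    span_le.2 <| Set.range_subset_iff.2 fun i => by simp [N]
  have hN : IsNilpotent N := ⟨2, b.ext fun i => by
    cases i with
    | inl i => simp [N, sq]
    | inr k => simpa [N, sq] using hN_inl (hv k)⟩
  refine ⟨b.map (LinearMap.GeneralLinearGroup.toLinearEquiv hN.isUnit_one_add.unit), ?_, ?_⟩ <;>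
    intro i <;> simp [N]

lemma finrank_span_image_finset {K V ι : Type*} [DivisionRing K] [AddCommGroup V] [Module K V]
    (e : Basis ι K V) (t : Finset ι) : finrank K (span K (e '' t)) = #t := by
  rw [Set.image_eq_range]
  exact (finrank_span_eq_card (e.linearIndependent.comp _ Subtype.val_injective)).trans
    (Fintype.card_coe t)

end Module.Basis

lemma Submodule.finrank_map_mkQ_add_finrank {K V : Type*} [DivisionRing K] [AddCommGroup V]
    [Module K V] [FiniteDimensional K V] {N W : Submodule K V} (h : N ≤ W) :
    finrank K (W.map N.mkQ) + finrank K N = finrank K W := by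
  have hr := LinearMap.finrank_range_add_finrank_ker (N.mkQ ∘ₗ W.subtype)
  rwa [LinearMap.range_comp, range_subtype, LinearMap.ker_comp, ker_mkQ,
    (comapSubtypeEquivOfLe h).finrank_eq] at hr

variable {K V : Type*} [Field K] [AddCommGroup V] [Module K V]

def IsJordanChain (n : V →ₗ[K] V) {m : ℕ} (v : Fin m → V) : Prop :=
  ∀ j : Fin m, n (v j) = if h : 0 < j.1 then v ⟨j.1 - 1, by omega⟩ else 0

namespace IsJordanChain

variable {n : V →ₗ[K] V} {m : ℕ} {v w : Fin m → V}

lemma add (hv : IsJordanChain n v) (hw : IsJordanChain n w) : IsJordanChain n (v + w) := by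
  intro j
  simp only [Pi.add_apply, map_add, hv j, hw j]
  split_ifs <;> simp

lemma smul (hv : IsJordanChain n v) (a : K) : IsJordanChain n (a • v) := by
  intro j
  simp only [Pi.smul_apply, map_smul, hv j]
  split_ifs <;> simp

lemma comp_castLE (hv : IsJordanChain n v) {m' : ℕ} (h : m' ≤ m) :
    IsJordanChain n (v ∘ Fin.castLE h) := fun j => hv (Fin.castLE h j)

lemma pow_apply (hv : IsJordanChain n v) (t : ℕ) (j : Fin m) :
    (n ^ t) (v j) = if h : t ≤ j.1 then v ⟨j.1 - t, by omega⟩ else 0 := by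
  induction t with
  | zero => simp
  | succ t ih =>
    rw [pow_succ', Module.End.mul_apply, ih]
    by_cases ht : t + 1 ≤ j.1
    · rw [dif_pos (by omega), dif_pos ht, hv, dif_pos (by simp; omega)]
      simp only [Nat.sub_sub]
    · rw [dif_neg ht]
      split_ifs with ht'
      · rw [hv, dif_neg (by simp; omega)]
      · exact map_zero _

end IsJordanChain

/-- The action of `n ^ s` on the indices of a basis made of two Jordan chains, `none` standing
for `0`. -/
def jordanShift (p q s : ℕ) : Fin p ⊕ Fin q → Option (Fin p ⊕ Fin q)
  | .inl j => if h : s ≤ j.1 then some (.inl ⟨j.1 - s, by omega⟩) else none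
  | .inr j => if h : s ≤ j.1 then some (.inr ⟨j.1 - s, by omega⟩) else none

lemma jordanShift_inj {p q s : ℕ} :
    ∀ i i' k, k ∈ jordanShift p q s i → k ∈ jordanShift p q s i' → i = i' := by
  rintro (i | i) (i' | i') (k | k) h h' <;> simp only [jordanShift] at h h' <;>
    split_ifs at h h' <;> simp_all [Fin.ext_iff] <;> omega

lemma pow_apply_jordanShift {n : V →ₗ[K] V} {p q : ℕ} {e : Fin p ⊕ Fin q → V}
    (h₁ : IsJordanChain n (e ∘ .inl)) (h₂ : IsJordanChain n (e ∘ .inr)) (s : ℕ)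
    (i : Fin p ⊕ Fin q) : (n ^ s) (e i) = (jordanShift p q s i).elim 0 e := by
  rcases i with j | j
  · rw [show e (.inl j) = (e ∘ .inl) j from rfl, h₁.pow_apply]
    simp only [jordanShift]
    split_ifs <;> rfl
  · rw [show e (.inr j) = (e ∘ .inr) j from rfl, h₂.pow_apply]
    simp only [jordanShift]
    split_ifs <;> rfl

lemma jordanShift_preimage_bottom_inr {p q s : ℕ} (hq : 0 < q) :
    {i | ∀ k ∈ jordanShift p q s i, k ∈ ({.inr ⟨0, hq⟩} : Set (Fin p ⊕ Fin q))} =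
      ↑(({j : Fin p | j < s} : Finset _).disjSum ({j : Fin q | j < s + 1} : Finset _)) := by
  ext (j | j) <;> by_cases hs : s ≤ j.1 <;> simp [jordanShift, hs, Fin.ext_iff]
  · exact ⟨fun h => absurd rfl (h ⟨j.1 - s, by omega⟩), by omega⟩
  · omega
  · exact ⟨fun h => by have : j.1 - s = 0 := h ⟨j.1 - s, by omega⟩ rfl; omega,
      fun h k hk => by rw [← hk]; omega⟩
  · omega

lemma finrank_comap_pow_span_bottom_inr {n : V →ₗ[K] V} {p q : ℕ}
    (e : Basis (Fin p ⊕ Fin q) K V) (h₁ : IsJordanChain n (e ∘ .inl))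
    (h₂ : IsJordanChain n (e ∘ .inr)) (hq : 0 < q) (s : ℕ) :
    finrank K (comap (n ^ s) (K ∙ e (.inr ⟨0, hq⟩))) = min s p + min (s + 1) q := by
  classical
  rw [← Set.image_singleton, e.comap_span_image (pow_apply_jordanShift h₁ h₂ s) jordanShift_inj,
    jordanShift_preimage_bottom_inr hq, e.finrank_span_image_finset, card_disjSum,
    Fin.card_filter_val_lt, Fin.card_filter_val_lt, min_comm p, min_comm q]

end

/-- Let `n` be nilpotent of Jordan type `(p,q)` on `V`, `p ≥ q ≥ 1`, with adapted basis
`e_{i,j}`. If `F₁ = span(a·e_{1,1} + e_{1,2})` (a line in `ker n` different from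
`span(e_{1,1})`), then the endomorphism induced by `n` on `V/F₁` is nilpotent of Jordan
type `(p, q−1)` (type `(p)` if `q = 1`), characterized by
`dim ker(n̄ˢ) = min(s,p) + min(s,q−1)` for all `s`. -/
theorem stmt9 {K V : Type*} [Field K] [AddCommGroup V] [Module K V]
    (p q : ℕ) (hq : 1 ≤ q) (hpq : q ≤ p) (hp : 0 < p)
    (n : V →ₗ[K] V) (b : Module.Basis (Fin p ⊕ Fin q) K V)
    (hb1 : ∀ j : Fin p, n (b (Sum.inl j)) =
      if h : 0 < j.1 then b (Sum.inl ⟨j.1 - 1, Nat.lt_of_le_of_lt (Nat.sub_le j.1 1) j.2⟩)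
      else 0)
    (hb2 : ∀ j : Fin q, n (b (Sum.inr j)) =
      if h : 0 < j.1 then b (Sum.inr ⟨j.1 - 1, Nat.lt_of_le_of_lt (Nat.sub_le j.1 1) j.2⟩)
      else 0)
    (a : K)
    (h : (K ∙ (a • b (Sum.inl ⟨0, hp⟩) + b (Sum.inr ⟨0, hq⟩))) ≤
      Submodule.comap n (K ∙ (a • b (Sum.inl ⟨0, hp⟩) + b (Sum.inr ⟨0, hq⟩)))) :
    ∀ s, Module.finrank K
        (LinearMap.ker
          ((Submodule.mapQ (K ∙ (a • b (Sum.inl ⟨0, hp⟩) + b (Sum.inr ⟨0, hq⟩)))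
            (K ∙ (a • b (Sum.inl ⟨0, hp⟩) + b (Sum.inr ⟨0, hq⟩))) n h) ^ s)) =
      min s p + min s (q - 1) := by
  have : FiniteDimensional K V := .of_basis b
  obtain ⟨e, he₁, he₂⟩ := b.exists_basis_inr_add (fun j => a • b (.inl (Fin.castLE hpq j)))
    fun j => smul_mem _ _ (subset_span ⟨_, rfl⟩)
  have hb₁ : IsJordanChain n (b ∘ .inl) := hb1
  have hb₂ : IsJordanChain n (b ∘ .inr) := hb2
  have h₁ : IsJordanChain n (e ∘ .inl) := by
    rwa [show e ∘ .inl = b ∘ .inl from funext he₁]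
  have h₂ : IsJordanChain n (e ∘ .inr) := by
    rw [show e ∘ .inr = b ∘ .inr + a • ((b ∘ .inl) ∘ Fin.castLE hpq) from funext he₂]
    exact hb₂.add ((hb₁.comp_castLE hpq).smul a)
  have hv : a • b (.inl ⟨0, hp⟩) + b (.inr ⟨0, hq⟩) = e (.inr ⟨0, hq⟩) := by
    rw [he₂, add_comm]
    rfl
  intro s
  have hs := le_comap_pow_of_le_comap _ h s
  have hrank := finrank_map_mkQ_add_finrank hs
  rw [hv, finrank_comap_pow_span_bottom_inr e h₁ h₂ hq s,
    finrank_span_singleton (e.ne_zero _)] at hrank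
  rw [← mapQ_pow _ h s hs, ker_mapQ, hv]
  omega
end

section
/- The number of standard Young tableaux of shape (p,q) with p ≥ q ≥ 0, p + q = n, equals binom(n, q) − binom(n, q−1) (with binom(n,−1) = 0). Equivalently, fillings of the two-column (or two-row) shape with 1,…,n strictly decreasing along the prescribed directions are counted by this ballot-number formula. -/
/-!
A standard tableau of shape `(p, q)` is determined by the set of entries in its second row, that
is, by a word of length `p + q` with `q` letters marking the second row. The column condition
says exactly that every prefix of this word contains at least as many first-row as second-row
letters: the word is a ballot sequence. Deleting the last letter gives the recursion
`B(n + 1, q + 1) = B(n, q + 1) + B(n, q)` for `2 (q + 1) ≤ n + 1`, which is also satisfied by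
`C(n, q) - C(n, q - 1)` by Pascal's rule; on the boundary `n = 2 q + 1` one uses `B(n, q + 1) = 0`
and `C(2q + 1, q + 1) = C(2q + 1, q)`.
-/

open Finset

namespace Finset

variable {α : Type*} [LinearOrder α]

theorem orderEmbOfFin_le_iff_lt_card_filter_le {s : Finset α} {k : ℕ} (h : #s = k) (i : Fin k)
    (x : α) : s.orderEmbOfFin h i ≤ x ↔ (i : ℕ) < #{y ∈ s | y ≤ x} := by
  set e := s.orderEmbOfFin h
  have hcard : #{y ∈ s | y ≤ x} = #{j | e j ≤ x} := by
    rw [← map_orderEmbOfFin_univ s h, filter_map, card_map]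
    rfl
  rw [hcard]
  constructor
  · intro hx
    calc (i : ℕ) < #(Iic i) := by simp
      _ ≤ #{j | e j ≤ x} := card_le_card fun j hj => by
        simpa using (e.monotone (mem_Iic.1 hj)).trans hx
  · contrapose!
    intro hx
    calc #{j | e j ≤ x} ≤ #(Iio i) := card_le_card fun j hj => by
          simp only [mem_filter, mem_univ, true_and] at hj
          exact mem_Iio.2 (e.lt_iff_lt.1 (hj.trans_lt hx))
      _ = i := Fin.card_Iio i

theorem forall_card_filter_le_card_filter_iff_orderEmbOfFin_lt {s t : Finset α}
    (hst : Disjoint s t) {p q : ℕ} (hs : #s = q) (ht : #t = p) (hqp : q ≤ p) :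
    (∀ x, #{y ∈ s | y ≤ x} ≤ #{y ∈ t | y ≤ x}) ↔
      ∀ i : Fin q, t.orderEmbOfFin ht (Fin.castLE hqp i) < s.orderEmbOfFin hs i := by
  constructor
  · intro hle i
    have hne : t.orderEmbOfFin ht (Fin.castLE hqp i) ≠ s.orderEmbOfFin hs i := fun heq =>
      disjoint_left.1 hst (orderEmbOfFin_mem s hs i) (heq ▸ orderEmbOfFin_mem t ht _)
    refine lt_of_le_of_ne ((orderEmbOfFin_le_iff_lt_card_filter_le ht _ _).2 ?_) hne
    exact ((orderEmbOfFin_le_iff_lt_card_filter_le hs i _).1 le_rfl).trans_le (hle _)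
  · intro hlt x
    obtain h0 | hpos := Nat.eq_zero_or_pos #{y ∈ s | y ≤ x}
    · simp [h0]
    have hq : #{y ∈ s | y ≤ x} ≤ q := hs ▸ card_le_card (filter_subset _ _)
    set i : Fin q := ⟨#{y ∈ s | y ≤ x} - 1, by omega⟩
    have hsi : s.orderEmbOfFin hs i ≤ x :=
      (orderEmbOfFin_le_iff_lt_card_filter_le hs i x).2 (by simp only [i]; omega)
    have hti := (orderEmbOfFin_le_iff_lt_card_filter_le ht _ x).1 ((hlt i).le.trans hsi)
    simp only [Fin.val_castLE, i] at hti
    omega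

end Finset

section Ballot

variable {n : ℕ}

def IsBallot (f : Fin n → Bool) : Prop :=
  ∀ k : Fin n, 2 * #{j | f j ∧ j ≤ k} ≤ k + 1

def ballotSeqs (n q : ℕ) : Set (Fin n → Bool) :=
  {f | #{j | f j} = q ∧ IsBallot f}

theorem card_filter_snoc (g : Fin n → Bool) (b : Bool) :
    #{j | (Fin.snoc g b : Fin (n + 1) → Bool) j} = #{j | g j} + b.toNat := by
  rw [card_filter, card_filter, Fin.sum_univ_castSucc]
  cases b <;> simp

theorem card_filter_snoc_le_castSucc (g : Fin n → Bool) (b : Bool) (k : Fin n) :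
    #{j | (Fin.snoc g b : Fin (n + 1) → Bool) j ∧ j ≤ k.castSucc} =
      #{j | g j ∧ j ≤ k} := by
  rw [card_filter, card_filter, Fin.sum_univ_castSucc]
  simp [(Fin.castSucc_lt_last k).not_ge]

theorem isBallot_snoc_iff (g : Fin n → Bool) (b : Bool) :
    IsBallot (Fin.snoc g b : Fin (n + 1) → Bool) ↔
      IsBallot g ∧ 2 * #{j | (Fin.snoc g b : Fin (n + 1) → Bool) j} ≤ n + 1 := by
  simp only [IsBallot, Fin.forall_fin_succ', card_filter_snoc_le_castSucc, Fin.val_castSucc,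
    Fin.le_last, and_true, Fin.val_last]

theorem snoc_mem_ballotSeqs_iff (g : Fin n → Bool) (b : Bool) (q : ℕ) (hq : 2 * q ≤ n + 1) :
    (Fin.snoc g b : Fin (n + 1) → Bool) ∈ ballotSeqs (n + 1) q ↔
      #{j | g j} + b.toNat = q ∧ IsBallot g := by
  simp only [ballotSeqs, Set.mem_ofPred_eq, isBallot_snoc_iff, card_filter_snoc]
  constructor
  · exact fun ⟨hq, hg, _⟩ => ⟨hq, hg⟩
  · exact fun ⟨hq, hg⟩ => ⟨hq, hg, by omega⟩

theorem ballotSeqs_zero (n : ℕ) : ballotSeqs n 0 = {fun _ => false} := by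
  ext f
  simp +contextual [ballotSeqs, IsBallot, filter_eq_empty_iff, funext_iff]

theorem two_mul_le_of_mem_ballotSeqs {q : ℕ} {f : Fin n → Bool} (hf : f ∈ ballotSeqs n q) :
    2 * q ≤ n := by
  obtain ⟨hq, hball⟩ := hf
  cases n with
  | zero => simp [← hq]
  | succ m => simpa [← hq, Fin.le_last] using hball (Fin.last m)

theorem ballotSeqs_succ_succ {q : ℕ} (h : 2 * (q + 1) ≤ n + 1) :
    ballotSeqs (n + 1) (q + 1) =
      (Fin.snoc · false) '' ballotSeqs n (q + 1) ∪ (Fin.snoc · true) '' ballotSeqs n q := by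
  ext f
  rw [← Fin.snoc_init_self f, snoc_mem_ballotSeqs_iff _ _ _ h]
  cases f (Fin.last n) <;> simp [ballotSeqs, Fin.snoc_inj]

theorem ballotSeqs_eq_empty {q : ℕ} (h : n < 2 * q) : ballotSeqs n q = ∅ :=
  Set.eq_empty_of_forall_notMem fun _ hf => h.not_ge (two_mul_le_of_mem_ballotSeqs hf)

theorem ncard_ballotSeqs_succ_succ {q : ℕ} (h : 2 * (q + 1) ≤ n + 1) :
    (ballotSeqs (n + 1) (q + 1)).ncard =
      (ballotSeqs n (q + 1)).ncard + (ballotSeqs n q).ncard := by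
  have hdisj : Disjoint ((Fin.snoc · false) '' ballotSeqs n (q + 1))
      ((Fin.snoc · true) '' ballotSeqs n q : Set (Fin (n + 1) → Bool)) := by
    refine Set.disjoint_left.2 ?_
    rintro _ ⟨g, -, rfl⟩ ⟨g', -, hg'⟩
    simpa using congrFun hg' (Fin.last n)
  have hinj (b : Bool) :
      Function.Injective fun g : Fin n → Bool => (Fin.snoc g b : Fin (n + 1) → Bool) :=
    fun _ _ hg => (Fin.snoc_inj.1 hg).1
  rw [ballotSeqs_succ_succ h, Set.ncard_union_eq hdisj,
    Set.ncard_image_of_injective _ (hinj false), Set.ncard_image_of_injective _ (hinj true)]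

theorem ncard_ballotSeqs_add_choose {q : ℕ} (h : 2 * (q + 1) ≤ n) :
    (ballotSeqs n (q + 1)).ncard + n.choose q = n.choose (q + 1) := by
  induction n generalizing q with
  | zero => omega
  | succ n ih =>
    have hup : (ballotSeqs n (q + 1)).ncard + n.choose q = n.choose (q + 1) := by
      by_cases hq : 2 * (q + 1) ≤ n
      · exact ih hq
      · obtain rfl : n = 2 * q + 1 := by omega
        rw [ballotSeqs_eq_empty (by omega), Set.ncard_empty, zero_add, Nat.choose_symm_half]
    have hdown : (ballotSeqs n q).ncard + (n + 1).choose q = 2 * n.choose q := by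
      cases q with
      | zero => simp [ballotSeqs_zero]
      | succ q =>
        have := ih (q := q) (by omega)
        rw [Nat.choose_succ_succ']
        omega
    rw [ncard_ballotSeqs_succ_succ h, Nat.choose_succ_succ' n q]
    omega


theorem isBallot_iff_card_filter_le (f : Fin n → Bool) :
    IsBallot f ↔ ∀ k, #{j ∈ {j | f j} | j ≤ k} ≤ #{j ∈ {j | ¬ f j} | j ≤ k} := by
  have hsum (k : Fin n) : #{j | f j ∧ j ≤ k} + #{j | ¬ f j ∧ j ≤ k} = k + 1 := by
    rw [← Fin.card_Iic k, ← card_filter_add_card_filter_not (s := Iic k) fun j => f j]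
    congr 2 <;> ext <;> simp [and_comm]
  simp only [IsBallot, filter_filter]
  refine forall_congr' fun k => ?_
  have := hsum k
  constructor <;> intro <;> omega

theorem card_filter_not_eq {p q : ℕ} {f : Fin (p + q) → Bool} (hs : #{j | f j} = q) :
    #{j | ¬ f j} = p := by
  have := card_filter_add_card_filter_not (s := univ) fun j => f j
  rw [card_univ, Fintype.card_fin] at this
  omega

theorem isBallot_iff_orderEmbOfFin_lt {p q : ℕ} (hpq : q ≤ p) (f : Fin (p + q) → Bool)
    (hs : #{j | f j} = q) (ht : #{j | ¬ f j} = p) :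
    IsBallot f ↔ ∀ i : Fin q,
      ({j | ¬ f j} : Finset _).orderEmbOfFin ht (Fin.castLE hpq i) <
        ({j | f j} : Finset _).orderEmbOfFin hs i := by
  rw [isBallot_iff_card_filter_le]
  exact forall_card_filter_le_card_filter_iff_orderEmbOfFin_lt
    (disjoint_filter_filter_not _ _ _) hs ht hpq

end Ballot

def TwoRowTableau (p q : ℕ) (hpq : q ≤ p) : Type :=
  {rs : (Fin p → Fin (p + q)) × (Fin q → Fin (p + q)) //
    StrictMono rs.1 ∧ StrictMono rs.2 ∧
    (∀ i : Fin q, rs.1 (Fin.castLE hpq i) < rs.2 i) ∧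
    Function.Injective (Sum.elim rs.1 rs.2)}

namespace TwoRowTableau

variable {p q : ℕ} {hpq : q ≤ p}

def secondRow (T : TwoRowTableau p q hpq) : Fin (p + q) → Bool :=
  fun j => decide (∃ i, T.1.2 i = j)

theorem card_secondRow (T : TwoRowTableau p q hpq) : #{j | T.secondRow j} = q := by
  have : ({j | T.secondRow j} : Finset _) = univ.image T.1.2 := by ext; simp [secondRow]
  rw [this, card_image_of_injective _ T.2.2.1.injective, card_univ, Fintype.card_fin]

theorem card_not_secondRow (T : TwoRowTableau p q hpq) : #{j | ¬ T.secondRow j} = p :=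
  card_filter_not_eq T.card_secondRow

theorem eq_orderEmbOfFin (T : TwoRowTableau p q hpq) :
    T.1 = (⇑(({j | ¬ T.secondRow j} : Finset _).orderEmbOfFin T.card_not_secondRow),
      ⇑(({j | T.secondRow j} : Finset _).orderEmbOfFin T.card_secondRow)) := by
  obtain ⟨⟨r₁, r₂⟩, hr₁, hr₂, -, hinj⟩ := T
  have hdisj (i : Fin p) (i' : Fin q) : r₂ i' ≠ r₁ i := fun h =>
    Sum.inr_ne_inl (hinj (a₁ := .inr i') (a₂ := .inl i) h)
  refine Prod.ext (orderEmbOfFin_unique _ (fun i => ?_) hr₁)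
    (orderEmbOfFin_unique _ (fun i => ?_) hr₂) <;> simp [secondRow, hdisj]

theorem isBallot_secondRow (T : TwoRowTableau p q hpq) : IsBallot T.secondRow := by
  have hcol := T.2.2.2.1
  rw [T.eq_orderEmbOfFin] at hcol
  exact (isBallot_iff_orderEmbOfFin_lt hpq _ _ _).2 hcol

end TwoRowTableau

def ballotSeqsEquivTwoRowTableau {p q : ℕ} (hpq : q ≤ p) :
    ballotSeqs (p + q) q ≃ TwoRowTableau p q hpq where
  toFun f :=
    let r₁ := ({j | ¬ f.1 j} : Finset _).orderEmbOfFin (card_filter_not_eq f.2.1)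
    let r₂ := ({j | f.1 j} : Finset _).orderEmbOfFin f.2.1
    ⟨(r₁, r₂), r₁.strictMono, r₂.strictMono,
      (isBallot_iff_orderEmbOfFin_lt hpq _ _ _).1 f.2.2,
      r₁.injective.sumElim r₂.injective fun i i' h => by
        have h₁ := orderEmbOfFin_mem ({j | ¬ f.1 j} : Finset _) (card_filter_not_eq f.2.1) i
        have h₂ := orderEmbOfFin_mem ({j | f.1 j} : Finset _) f.2.1 i'
        rw [mem_filter] at h₁ h₂
        exact h₁.2 (h ▸ h₂.2)⟩
  invFun T := ⟨T.secondRow, T.card_secondRow, T.isBallot_secondRow⟩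
  left_inv f := Subtype.ext <| funext fun j => by
    simp [TwoRowTableau.secondRow, ← Set.mem_range]
  right_inv T := Subtype.ext T.eq_orderEmbOfFin.symm

/-- The number of standard Young tableaux of shape `(p,q)` with `p ≥ q ≥ 0`, `n = p + q`,
equals `C(n,q) − C(n,q−1)` (with `C(n,−1) = 0`). A standard tableau is encoded as a pair
of strictly increasing rows of lengths `p` and `q` with entries in `{0,…,n−1}`, strictly
increasing down the columns, and using each entry exactly once (injectivity). -/
theorem stmt12 (p q : ℕ) (hpq : q ≤ p) :
    Nat.card {rs : (Fin p → Fin (p + q)) × (Fin q → Fin (p + q)) //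
        StrictMono rs.1 ∧ StrictMono rs.2 ∧
        (∀ i : Fin q, rs.1 (Fin.castLE hpq i) < rs.2 i) ∧
        Function.Injective (Sum.elim rs.1 rs.2)} =
      (p + q).choose q - (if q = 0 then 0 else (p + q).choose (q - 1)) := by
  refine (Nat.card_congr (ballotSeqsEquivTwoRowTableau hpq).symm).trans ?_
  rw [Nat.card_coe_set_eq]
  rcases q with _ | q
  · simp [ballotSeqs_zero]
  · have := ncard_ballotSeqs_add_choose (n := p + (q + 1)) (q := q) (by omega)
    rw [if_neg q.succ_ne_zero, Nat.add_sub_cancel]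
    omega
end
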